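/- arXiv:1506.05576 — 2 statements merged into one kernel-verified Lean document; each statement's English description precedes it below -/
import Mathlib

section
/- Let f : ℝ^d → ℝ be C¹ and bounded above with m := sup f. For each n ≥ 1 set g_n(x) := f(x) − |x|²/n. Then g_n attains its maximum at some point x_n, and as n → ∞: f(x_n) → m, |x_n|²/n → 0, and (1 + |x_n|)·|∇f(x_n)| → 0. -/
open Filter Topology Set

/-!
At a maximiser `x_n` of `g_n = f - ‖·‖²/n`, comparing with any fixed `y` gives
`f y - ‖y‖²/n ≤ g_n(x_n) ≤ f(x_n) ≤ m`, so `g_n(x_n) → m`, whence `f(x_n) → m` and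
`‖x_n‖²/n = f(x_n) - g_n(x_n) → 0`. Fermat's rule gives `∇f(x_n) = (2/n) x_n`, and
`(1 + r) · 2r/n ≤ (3r² + 1)/n` then controls the gradient term.
-/

section Penalty

variable {E : Type*}

theorem Continuous.exists_forall_sub_norm_sq_div_le [NormedAddCommGroup E] [ProperSpace E]
    {f : E → ℝ} (hf : Continuous f) (hbd : BddAbove (range f)) {c : ℝ} (hc : 0 < c) :
    ∃ z, ∀ y, f y - ‖y‖ ^ 2 / c ≤ f z - ‖z‖ ^ 2 / c := by
  obtain ⟨M, hM⟩ := hbd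
  refine (hf.sub ((continuous_norm.pow 2).div_const c)).exists_forall_ge ?_
  have hpen : Tendsto (fun y : E => M - ‖y‖ ^ 2 / c) (cocompact E) atBot :=
    tendsto_atBot_add_const_left _ M <| tendsto_neg_atTop_atBot.comp <|
      ((tendsto_pow_atTop two_ne_zero).comp tendsto_norm_cocompact_atTop).atTop_div_const hc
  exact tendsto_atBot_mono (fun y => sub_le_sub_right (hM ⟨y, rfl⟩) _) hpen

theorem gradient_eq_smul_of_forall_sub_norm_sq_div_le [NormedAddCommGroup E]
    [InnerProductSpace ℝ E] [CompleteSpace E] {f : E → ℝ} {z : E} (hf : DifferentiableAt ℝ f z)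
    {c : ℝ} (hz : ∀ y, f y - ‖y‖ ^ 2 / c ≤ f z - ‖z‖ ^ 2 / c) :
    gradient f z = (2 / c) • z := by
  have hpen : HasFDerivAt (fun y : E => ‖y‖ ^ 2 / c) (c⁻¹ • 2 • innerSL ℝ z) z := by
    simpa [div_eq_inv_mul, Pi.smul_def, smul_eq_mul] using
      (hasStrictFDerivAt_norm_sq z).hasFDerivAt.const_smul c⁻¹
  have hdual : c⁻¹ • 2 • innerSL ℝ z = InnerProductSpace.toDual ℝ E ((2 / c) • z) := by
    ext y
    simp only [smul_apply, coe_innerSL_apply, nsmul_eq_mul, Nat.cast_ofNat,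
      smul_eq_mul, div_eq_inv_mul, map_smul, InnerProductSpace.toDual_apply_apply]
    ring
  have hmax : IsLocalMax (fun y => f y - ‖y‖ ^ 2 / c) z := .of_forall hz
  have hcrit := hmax.hasFDerivAt_eq_zero (hf.hasFDerivAt.sub hpen)
  rw [gradient, sub_eq_zero.mp hcrit, hdual, LinearIsometryEquiv.symm_apply_apply]

theorem tendsto_sub_norm_sq_div_of_forall_le [SeminormedAddCommGroup E] {f : E → ℝ}
    (hbd : BddAbove (range f)) {x : ℕ → E}
    (hx : ∀ n : ℕ, 1 ≤ n → ∀ y, f y - ‖y‖ ^ 2 / n ≤ f (x n) - ‖x n‖ ^ 2 / n) :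
    Tendsto (fun n : ℕ => f (x n) - ‖x n‖ ^ 2 / n) atTop (𝓝 (sSup (range f))) := by
  refine tendsto_order.2 ⟨fun b hb => ?_, fun b hb => .of_forall fun n => ?_⟩
  · obtain ⟨_, ⟨y, rfl⟩, hby⟩ := exists_lt_of_lt_csSup (range_nonempty f) hb
    have hy : Tendsto (fun n : ℕ => f y - ‖y‖ ^ 2 / n) atTop (𝓝 (f y)) := by
      simpa using tendsto_const_nhds.sub (tendsto_const_div_atTop_nhds_zero_nat (‖y‖ ^ 2))
    filter_upwards [hy.eventually_const_lt hby, eventually_ge_atTop 1] with n hn hn1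
    exact hn.trans_le (hx n hn1 y)
  · have hpen : 0 ≤ ‖x n‖ ^ 2 / n := by positivity
    linarith [le_csSup hbd (mem_range_self (x n))]

theorem tendsto_of_forall_sub_norm_sq_div_le [SeminormedAddCommGroup E] {f : E → ℝ}
    (hbd : BddAbove (range f)) {x : ℕ → E}
    (hx : ∀ n : ℕ, 1 ≤ n → ∀ y, f y - ‖y‖ ^ 2 / n ≤ f (x n) - ‖x n‖ ^ 2 / n) :
    Tendsto (fun n => f (x n)) atTop (𝓝 (sSup (range f))) ∧
      Tendsto (fun n : ℕ => ‖x n‖ ^ 2 / n) atTop (𝓝 0) := by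
  have hval := tendsto_sub_norm_sq_div_of_forall_le hbd hx
  have hf : Tendsto (fun n => f (x n)) atTop (𝓝 (sSup (range f))) :=
    tendsto_of_tendsto_of_tendsto_of_le_of_le hval tendsto_const_nhds
      (fun n => sub_le_self _ (by positivity)) (fun n => le_csSup hbd (mem_range_self (x n)))
  refine ⟨hf, ?_⟩
  simpa using hf.sub hval

end Penalty

/-- If `f : ℝ^d → ℝ` is `C¹` and bounded above with `m = sup f`, then for each `n ≥ 1` the
penalized function `g_n(x) = f(x) − |x|²/n` attains its maximum at some `x_n`, and
`f(x_n) → m`, `|x_n|²/n → 0`, and `(1+|x_n|)·|∇f(x_n)| → 0` as `n → ∞`. -/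
theorem stmt10 {d : ℕ} (f : EuclideanSpace ℝ (Fin d) → ℝ)
    (hf : ContDiff ℝ 1 f) (hbd : BddAbove (Set.range f)) :
    ∃ x : ℕ → EuclideanSpace ℝ (Fin d),
      (∀ n : ℕ, 1 ≤ n → ∀ y, f y - ‖y‖^2 / n ≤ f (x n) - ‖x n‖^2 / n) ∧
      Tendsto (fun n => f (x n)) atTop (nhds (sSup (Set.range f))) ∧
      Tendsto (fun n => ‖x n‖^2 / n) atTop (nhds 0) ∧
      Tendsto (fun n => (1 + ‖x n‖) * ‖gradient f (x n)‖) atTop (nhds 0) := by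
  have hmax : ∀ n : ℕ, 1 ≤ n → ∃ z, ∀ y, f y - ‖y‖ ^ 2 / n ≤ f z - ‖z‖ ^ 2 / n :=
    fun n hn => hf.continuous.exists_forall_sub_norm_sq_div_le hbd (by exact_mod_cast hn)
  choose! x hx using hmax
  obtain ⟨hfx, hpen⟩ := tendsto_of_forall_sub_norm_sq_div_le hbd hx
  refine ⟨x, hx, hfx, hpen, ?_⟩
  refine squeeze_zero' (.of_forall fun n => by positivity) ?_
    (by simpa using (hpen.const_mul 3).add tendsto_one_div_atTop_nhds_zero_nat)
  filter_upwards [eventually_ge_atTop 1] with n hn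
  rw [gradient_eq_smul_of_forall_sub_norm_sq_div_le (hf.differentiable one_ne_zero _) (hx n hn),
    norm_smul, Real.norm_of_nonneg (by positivity)]
  have hamgm : 2 * ‖x n‖ ≤ ‖x n‖ ^ 2 + 1 := by nlinarith [sq_nonneg (‖x n‖ - 1)]
  field_simp
  nlinarith [norm_nonneg (x n)]
end

section
/- Let A* be the operator A*φ(x) = b(x)·∇φ(x) + (1/2)·tr(a(x)∇²φ(x)) where b : ℝ^d → ℝ^d and σ : ℝ^d → ℝ^{d×n} are globally Lipschitz (so |b(x)| ≤ K(1+|x|) and ‖σ(x)‖ ≤ K(1+|x|)), and a = σσᵀ. If f ∈ C²(ℝ^d) is bounded, then for every λ > 0, λ·sup f ≤ sup (λf − A*f). -/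
/-!
Penalize `f` by `ε log (1 + |x|²)`: since `f` is bounded, `f - ε log (1 + |x|²)` attains its
maximum at some `x_ε`, where `∇f(x_ε) = 2ε x_ε / (1 + |x_ε|²)` and `∇²f(x_ε) ≤ 2ε / (1 + |x_ε|²)`.
The logarithm makes these bounds decay like `1 / (1 + |x_ε|)` and `1 / (1 + |x_ε|)²`, exactly
compensating the linear growth of `b` and `σ`, so `A*f(x_ε) ≤ C ε`. As `x_ε` maximizes the
penalized function, `λ f(x_ε) - A*f(x_ε) ≥ λ f(y) - ε (λ log (1 + |y|²) + C)` for every `y`,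
and letting `ε → 0` gives the claim.
-/

open Filter Topology
open scoped Matrix

theorem IsLocalMax.deriv_deriv_nonpos {φ : ℝ → ℝ} {x : ℝ} (hmax : IsLocalMax φ x)
    (hc : ContinuousAt φ x) : deriv (deriv φ) x ≤ 0 := by
  by_contra! hpos
  -- a positive second derivative would also make `x` a local minimum, so `φ` is locally constant
  have hmin := isLocalMin_of_deriv_deriv_pos hpos hmax.deriv_eq_zero hc
  have hconst : φ =ᶠ[𝓝 x] fun _ => φ x :=
    (hmax.and hmin).mono fun _ hy => le_antisymm hy.1 hy.2
  have : deriv (deriv φ) x = 0 := by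
    rw [hconst.deriv.deriv_eq]; simp
  exact hpos.ne' this

section Line

variable {E : Type*} [NormedAddCommGroup E] [NormedSpace ℝ E] {f : E → ℝ} {x v : E}

theorem ContDiff.differentiable_fderiv (hf : ContDiff ℝ 2 f) : Differentiable ℝ (fderiv ℝ f) :=
  (hf.fderiv_right (m := 1) (by norm_num)).differentiable (by norm_num)

theorem fderiv_fderiv_apply (hf : DifferentiableAt ℝ (fderiv ℝ f) x) (v w : E) :
    fderiv ℝ (fun y => fderiv ℝ f y v) x w = fderiv ℝ (fderiv ℝ f) x w v := by
  rw [fderiv_clm_apply hf (differentiableAt_const v)]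
  simp

theorem hasDerivAt_comp_add_smul {t : ℝ} (hf : DifferentiableAt ℝ f (x + t • v)) :
    HasDerivAt (fun s : ℝ => f (x + s • v)) (fderiv ℝ f (x + t • v) v) t := by
  have hline : HasDerivAt (fun s : ℝ => x + s • v) v t := by
    simpa using ((hasDerivAt_id t).smul_const v).const_add x
  exact hf.hasFDerivAt.comp_hasDerivAt t hline

theorem hasDerivAt_fderiv_comp_add_smul (hf : DifferentiableAt ℝ (fderiv ℝ f) x) :
    HasDerivAt (fun s : ℝ => fderiv ℝ f (x + s • v) v) (fderiv ℝ (fderiv ℝ f) x v v) 0 := by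
  have h := hasDerivAt_comp_add_smul (f := fun y => fderiv ℝ f y v) (x := x) (v := v) (t := 0)
    (by simpa using hf.clm_apply (differentiableAt_const v))
  simpa [fderiv_fderiv_apply hf] using h

theorem IsLocalMax.fderiv_apply_eq_and_le {g g' : ℝ → ℝ} {L : ℝ} (hdf : Differentiable ℝ f)
    (hddf : DifferentiableAt ℝ (fderiv ℝ f) x)
    (hg : ∀ t, HasDerivAt g (g' t) t) (hg' : HasDerivAt g' L 0)
    (hmax : IsLocalMax (fun t => f (x + t • v) - g t) 0) :
    fderiv ℝ f x v = g' 0 ∧ fderiv ℝ (fderiv ℝ f) x v v ≤ L := by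
  have hderiv : deriv (fun t => f (x + t • v) - g t) = fun t => fderiv ℝ f (x + t • v) v - g' t :=
    funext fun t => ((hasDerivAt_comp_add_smul (hdf _)).fun_sub (hg t)).deriv
  have hfirst := hmax.deriv_eq_zero
  have hsecond := hmax.deriv_deriv_nonpos
    ((hasDerivAt_comp_add_smul (hdf _)).fun_sub (hg 0)).continuousAt
  rw [hderiv] at hfirst hsecond
  rw [((hasDerivAt_fderiv_comp_add_smul hddf).fun_sub hg').deriv] at hsecond
  simp only [zero_smul, add_zero] at hfirst
  constructor <;> linarith

end Line

theorem hasDerivAt_quadratic (a β γ t : ℝ) :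
    HasDerivAt (fun s => a + β * s + γ * s ^ 2) (β + 2 * γ * t) t := by
  have := (((hasDerivAt_id' t).const_mul β).const_add a).fun_add
    ((hasDerivAt_pow 2 t).const_mul γ)
  exact this.congr_deriv (by simp; ring)

theorem hasDerivAt_log_quadratic {a β γ : ℝ} (hp : ∀ t, 0 < a + β * t + γ * t ^ 2) (t : ℝ) :
    HasDerivAt (fun s => Real.log (a + β * s + γ * s ^ 2))
      ((β + 2 * γ * t) / (a + β * t + γ * t ^ 2)) t :=
  ((hasDerivAt_quadratic a β γ t).log (hp t).ne').congr_deriv (by ring)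

theorem hasDerivAt_deriv_log_quadratic {a β γ : ℝ} (ha : 0 < a) :
    HasDerivAt (fun t => (β + 2 * γ * t) / (a + β * t + γ * t ^ 2))
      ((2 * γ * a - β ^ 2) / a ^ 2) 0 := by
  have hnum := ((hasDerivAt_id' (0 : ℝ)).const_mul (2 * γ)).const_add β
  have := hnum.fun_div (hasDerivAt_quadratic a β γ 0) (by simpa using ha.ne')
  exact this.congr_deriv (by simp; ring)

section EuclideanWeight

variable {ι : Type*} [Fintype ι]

theorem dotProduct_self_nonneg (x : ι → ℝ) : 0 ≤ x ⬝ᵥ x :=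
  Finset.sum_nonneg fun i _ => mul_self_nonneg (x i)

theorem sq_le_dotProduct_self (x : ι → ℝ) (i : ι) : x i ^ 2 ≤ x ⬝ᵥ x := by
  rw [sq]
  exact Finset.single_le_sum (f := fun j => x j * x j) (fun j _ => mul_self_nonneg (x j))
    (Finset.mem_univ i)

theorem sq_norm_le_dotProduct_self (x : ι → ℝ) : ‖x‖ ^ 2 ≤ x ⬝ᵥ x := by
  have hnorm : ‖x‖ ≤ √(x ⬝ᵥ x) :=
    (pi_norm_le_iff_of_nonneg (Real.sqrt_nonneg _)).2 fun i =>
      Real.abs_le_sqrt (sq_le_dotProduct_self x i)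
  calc ‖x‖ ^ 2 ≤ √(x ⬝ᵥ x) ^ 2 := by gcongr
    _ = x ⬝ᵥ x := Real.sq_sqrt (dotProduct_self_nonneg x)

theorem dotProduct_self_le_card_mul_sq_norm (w : ι → ℝ) :
    w ⬝ᵥ w ≤ Fintype.card ι * ‖w‖ ^ 2 := by
  calc w ⬝ᵥ w ≤ ∑ _i : ι, ‖w‖ ^ 2 := Finset.sum_le_sum fun i _ => by
        rw [← sq, ← sq_abs, ← Real.norm_eq_abs]
        exact pow_le_pow_left₀ (norm_nonneg _) (norm_le_pi_norm w i) 2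
    _ = Fintype.card ι * ‖w‖ ^ 2 := by simp

theorem two_mul_dotProduct_le (x w : ι → ℝ) : 2 * (x ⬝ᵥ w) ≤ x ⬝ᵥ x + w ⬝ᵥ w := by
  simp only [dotProduct, Finset.mul_sum, ← Finset.sum_add_distrib]
  exact Finset.sum_le_sum fun i _ => by nlinarith [sq_nonneg (x i - w i)]

theorem dotProduct_self_le_of_norm_le {K : ℝ} {w x : ι → ℝ} (h : ‖w‖ ≤ K * (1 + ‖x‖)) :
    w ⬝ᵥ w ≤ 2 * Fintype.card ι * K ^ 2 * (1 + x ⬝ᵥ x) := by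
  have hsq : ‖w‖ ^ 2 ≤ K ^ 2 * (2 * (1 + x ⬝ᵥ x)) := calc
    ‖w‖ ^ 2 ≤ (K * (1 + ‖x‖)) ^ 2 := pow_le_pow_left₀ (norm_nonneg w) h 2
    _ = K ^ 2 * (1 + ‖x‖) ^ 2 := by ring
    _ ≤ K ^ 2 * (2 * (1 + x ⬝ᵥ x)) := by
      gcongr
      nlinarith [sq_norm_le_dotProduct_self x, sq_nonneg (‖x‖ - 1)]
  calc w ⬝ᵥ w ≤ Fintype.card ι * ‖w‖ ^ 2 := dotProduct_self_le_card_mul_sq_norm w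
    _ ≤ Fintype.card ι * (K ^ 2 * (2 * (1 + x ⬝ᵥ x))) := by gcongr
    _ = 2 * Fintype.card ι * K ^ 2 * (1 + x ⬝ᵥ x) := by ring

noncomputable def logPenalty (x : ι → ℝ) : ℝ := Real.log (1 + x ⬝ᵥ x)

theorem one_add_dotProduct_self_pos (x : ι → ℝ) : 0 < 1 + x ⬝ᵥ x := by
  linarith [dotProduct_self_nonneg x]

theorem logPenalty_nonneg (x : ι → ℝ) : 0 ≤ logPenalty x :=
  Real.log_nonneg (by linarith [dotProduct_self_nonneg x])

theorem continuous_logPenalty : Continuous (logPenalty : (ι → ℝ) → ℝ) := by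
  refine Continuous.log (by unfold dotProduct; fun_prop) fun x => ?_
  exact (one_add_dotProduct_self_pos x).ne'

theorem tendsto_logPenalty_cocompact :
    Tendsto (logPenalty : (ι → ℝ) → ℝ) (cocompact (ι → ℝ)) atTop := by
  have hnorm : Tendsto (fun x : ι → ℝ => Real.log (1 + ‖x‖ ^ 2)) (cocompact (ι → ℝ)) atTop :=
    Real.tendsto_log_atTop.comp <| tendsto_atTop_add_const_left _ _ <|
      (tendsto_pow_atTop two_ne_zero).comp tendsto_norm_cocompact_atTop
  refine tendsto_atTop_mono (fun x => ?_) hnorm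
  exact Real.log_le_log (by positivity) (by linarith [sq_norm_le_dotProduct_self x])

theorem one_add_dotProduct_self_add_smul (x v : ι → ℝ) (t : ℝ) :
    1 + (x + t • v) ⬝ᵥ (x + t • v) = (1 + x ⬝ᵥ x) + 2 * (x ⬝ᵥ v) * t + (v ⬝ᵥ v) * t ^ 2 := by
  simp only [add_dotProduct, dotProduct_add, smul_dotProduct, dotProduct_smul, smul_eq_mul,
    dotProduct_comm v x]
  ring

theorem exists_forall_sub_mul_logPenalty_le {f : (ι → ℝ) → ℝ} (hf : Continuous f)
    (hbdd : BddAbove (Set.range f)) {ε : ℝ} (hε : 0 < ε) :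
    ∃ x₀, ∀ y, f y - ε * logPenalty y ≤ f x₀ - ε * logPenalty x₀ := by
  obtain ⟨M, hM⟩ := hbdd
  refine (hf.sub (continuous_const.mul continuous_logPenalty)).exists_forall_ge ?_
  have : Tendsto (fun y => M - ε * logPenalty y) (cocompact (ι → ℝ)) atBot :=
    tendsto_atBot_add_const_left _ M <| tendsto_neg_atTop_atBot.comp <|
      tendsto_logPenalty_cocompact.const_mul_atTop hε
  exact tendsto_atBot_mono (fun y => by simpa using hM (Set.mem_range_self y)) this

theorem fderiv_apply_eq_and_le_of_forall_sub_mul_logPenalty_le {f : (ι → ℝ) → ℝ}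
    (hf : ContDiff ℝ 2 f) {ε : ℝ} (hε : 0 ≤ ε) {x₀ : ι → ℝ}
    (hmax : ∀ y, f y - ε * logPenalty y ≤ f x₀ - ε * logPenalty x₀) (v : ι → ℝ) :
    fderiv ℝ f x₀ v = ε * (2 * (x₀ ⬝ᵥ v)) / (1 + x₀ ⬝ᵥ x₀) ∧
      fderiv ℝ (fderiv ℝ f) x₀ v v ≤ ε * (2 * (v ⬝ᵥ v)) / (1 + x₀ ⬝ᵥ x₀) := by
  set a := 1 + x₀ ⬝ᵥ x₀
  set β := 2 * (x₀ ⬝ᵥ v)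
  set γ := v ⬝ᵥ v
  have ha : 0 < a := one_add_dotProduct_self_pos x₀
  have hp : ∀ t, 0 < a + β * t + γ * t ^ 2 := fun t =>
    one_add_dotProduct_self_add_smul x₀ v t ▸ one_add_dotProduct_self_pos (x₀ + t • v)
  have hline : IsLocalMax (fun t => f (x₀ + t • v) - ε * Real.log (a + β * t + γ * t ^ 2)) 0 :=
    Eventually.of_forall fun t => by
      have h := hmax (x₀ + t • v)
      rw [logPenalty, logPenalty, one_add_dotProduct_self_add_smul] at h
      simpa using h
  obtain ⟨hfirst, hsecond⟩ := hline.fderiv_apply_eq_and_le (hf.differentiable (by norm_num))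
    (hf.differentiable_fderiv x₀)
    (fun t => (hasDerivAt_log_quadratic hp t).const_mul ε)
    ((hasDerivAt_deriv_log_quadratic (β := β) (γ := γ) ha).const_mul ε)
  refine ⟨by simpa [mul_div_assoc] using hfirst, hsecond.trans ?_⟩
  rw [mul_div_assoc]
  refine mul_le_mul_of_nonneg_left ?_ hε
  rw [div_le_div_iff₀ (by positivity) ha]
  nlinarith [sq_nonneg β]

end EuclideanWeight

section Generator

variable {ι κ : Type*} [Fintype ι] [Fintype κ] [DecidableEq ι]

theorem ContinuousLinearMap.apply_eq_sum_smul_apply_single {M : Type*} [AddCommGroup M]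
    [Module ℝ M] [TopologicalSpace M] (L : (ι → ℝ) →L[ℝ] M) (v : ι → ℝ) :
    L v = ∑ i, v i • L (Pi.single i 1) := by
  conv_lhs => rw [pi_eq_sum_univ' v]
  simp [map_sum]

theorem ContinuousLinearMap.apply_apply_eq_sum (B : (ι → ℝ) →L[ℝ] (ι → ℝ) →L[ℝ] ℝ)
    (u w : ι → ℝ) :
    B u w = ∑ i, ∑ j, u i * w j * B (Pi.single i 1) (Pi.single j 1) := by
  rw [B.apply_eq_sum_smul_apply_single u]
  simp only [FunLike.coe_sum, FunLike.coe_smul, Finset.sum_apply, Pi.smul_apply, smul_eq_mul]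
  refine Finset.sum_congr rfl fun i _ => ?_
  rw [(B (Pi.single i 1)).apply_eq_sum_smul_apply_single w, Finset.mul_sum]
  simp only [smul_eq_mul]
  exact Finset.sum_congr rfl fun j _ => by ring

noncomputable def diffusionGenerator (b : (ι → ℝ) → ι → ℝ) (σ : (ι → ℝ) → ι → κ → ℝ)
    (f : (ι → ℝ) → ℝ) (x : ι → ℝ) : ℝ :=
  ∑ i, b x i * fderiv ℝ f x (Pi.single i 1) +
    (1/2) * ∑ i, ∑ j, (∑ k, σ x i k * σ x j k) *
      fderiv ℝ (fun y => fderiv ℝ f y (Pi.single j 1)) x (Pi.single i 1)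

theorem diffusionGenerator_eq {b : (ι → ℝ) → ι → ℝ} {σ : (ι → ℝ) → ι → κ → ℝ}
    {f : (ι → ℝ) → ℝ} {x : ι → ℝ} (hf : DifferentiableAt ℝ (fderiv ℝ f) x) :
    diffusionGenerator b σ f x = fderiv ℝ f x (b x) +
      (1/2) * ∑ k, fderiv ℝ (fderiv ℝ f) x (fun i => σ x i k) (fun i => σ x i k) := by
  have hdrift : ∑ i, b x i * fderiv ℝ f x (Pi.single i 1) = fderiv ℝ f x (b x) := by
    simp only [(fderiv ℝ f x).apply_eq_sum_smul_apply_single (b x), smul_eq_mul]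
  have hdiffusion : ∑ i, ∑ j, (∑ k, σ x i k * σ x j k) *
      fderiv ℝ (fun y => fderiv ℝ f y (Pi.single j 1)) x (Pi.single i 1) =
      ∑ k, fderiv ℝ (fderiv ℝ f) x (fun i => σ x i k) (fun i => σ x i k) := by
    simp only [fderiv_fderiv_apply hf, Finset.sum_mul]
    calc ∑ i, ∑ j, ∑ k,
          σ x i k * σ x j k * fderiv ℝ (fderiv ℝ f) x (Pi.single i 1) (Pi.single j 1)
        = ∑ k, ∑ i, ∑ j,
            σ x i k * σ x j k * fderiv ℝ (fderiv ℝ f) x (Pi.single i 1) (Pi.single j 1) :=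
          (Finset.sum_congr rfl fun i _ => Finset.sum_comm).trans Finset.sum_comm
      _ = _ := Finset.sum_congr rfl fun k _ => (ContinuousLinearMap.apply_apply_eq_sum _ _ _).symm
  rw [diffusionGenerator, hdrift, hdiffusion]

theorem diffusionGenerator_le_of_forall_sub_mul_logPenalty_le {b : (ι → ℝ) → ι → ℝ}
    {σ : (ι → ℝ) → ι → κ → ℝ} {f : (ι → ℝ) → ℝ} (hf : ContDiff ℝ 2 f) {K ε : ℝ} (hε : 0 ≤ ε) {x₀ : ι → ℝ}
    (hmax : ∀ y, f y - ε * logPenalty y ≤ f x₀ - ε * logPenalty x₀)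
    (hb : ‖b x₀‖ ≤ K * (1 + ‖x₀‖)) (hσ : ‖σ x₀‖ ≤ K * (1 + ‖x₀‖)) :
    diffusionGenerator b σ f x₀ ≤
      ε * (1 + 2 * Fintype.card ι * K ^ 2 * (Fintype.card κ + 1)) := by
  set c := 2 * (Fintype.card ι : ℝ) * K ^ 2
  have hq := one_add_dotProduct_self_pos x₀
  have hcond := fderiv_apply_eq_and_le_of_forall_sub_mul_logPenalty_le hf hε hmax
  have hdrift : fderiv ℝ f x₀ (b x₀) ≤ ε * (1 + c) := by
    rw [(hcond _).1, div_le_iff₀ hq]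
    have := dotProduct_self_le_of_norm_le hb
    nlinarith [two_mul_dotProduct_le x₀ (b x₀), mul_le_mul_of_nonneg_left this hε]
  have hcol : ∀ k, ‖fun i => σ x₀ i k‖ ≤ K * (1 + ‖x₀‖) := fun k =>
    (pi_norm_le_iff_of_nonneg ((norm_nonneg _).trans hσ)).2 fun i =>
      ((norm_le_pi_norm (σ x₀ i) k).trans (norm_le_pi_norm (σ x₀) i)).trans hσ
  have hdiffusion : ∀ k, fderiv ℝ (fderiv ℝ f) x₀ (fun i => σ x₀ i k) (fun i => σ x₀ i k) ≤
      2 * (ε * c) := fun k => by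
    refine (hcond _).2.trans ?_
    rw [div_le_iff₀ hq]
    nlinarith [mul_le_mul_of_nonneg_left (dotProduct_self_le_of_norm_le (hcol k)) hε]
  rw [diffusionGenerator_eq (hf.differentiable_fderiv x₀)]
  calc fderiv ℝ f x₀ (b x₀) +
        1 / 2 * ∑ k, fderiv ℝ (fderiv ℝ f) x₀ (fun i => σ x₀ i k) (fun i => σ x₀ i k)
      ≤ ε * (1 + c) + 1 / 2 * ∑ _k : κ, 2 * (ε * c) := by
        gcongr with k
        exact hdiffusion k
    _ = ε * (1 + c * (Fintype.card κ + 1)) := by simp; ring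

theorem exists_lt_sub_diffusionGenerator {b : (ι → ℝ) → ι → ℝ} {σ : (ι → ℝ) → ι → κ → ℝ}
    {f : (ι → ℝ) → ℝ} {K : ℝ}
    (hb : ∀ x, ‖b x‖ ≤ K * (1 + ‖x‖)) (hσ : ∀ x, ‖σ x‖ ≤ K * (1 + ‖x‖))
    (hf : ContDiff ℝ 2 f) (hbdd : BddAbove (Set.range f)) {lam : ℝ} (hlam : 0 ≤ lam)
    (y : ι → ℝ) {η : ℝ} (hη : 0 < η) :
    ∃ x, lam * f y - η < lam * f x - diffusionGenerator b σ f x := by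
  set C := 1 + 2 * (Fintype.card ι : ℝ) * K ^ 2 * (Fintype.card κ + 1)
  have hC : 0 ≤ C := by positivity
  set A := lam * logPenalty y + C
  have hA : 0 ≤ A := add_nonneg (mul_nonneg hlam (logPenalty_nonneg y)) hC
  set ε := η / (A + 1)
  have hε : 0 < ε := by positivity
  have hεA : ε * A < η := by
    rw [div_mul_eq_mul_div, div_lt_iff₀ (by positivity)]
    linarith
  obtain ⟨x₀, hmax⟩ := exists_forall_sub_mul_logPenalty_le hf.continuous hbdd hε
  refine ⟨x₀, ?_⟩
  have hG := diffusionGenerator_le_of_forall_sub_mul_logPenalty_le hf hε.le hmax (hb x₀) (hσ x₀)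
  have hy := mul_le_mul_of_nonneg_left (hmax y) hlam
  have hx₀ := mul_nonneg (mul_nonneg hlam hε.le) (logPenalty_nonneg x₀)
  linarith

end Generator

theorem stmt11_general {d n : ℕ} (K : NNReal)
    (b : (Fin d → ℝ) → (Fin d → ℝ)) (σ : (Fin d → ℝ) → (Fin d → Fin n → ℝ))
    (hbgr : ∀ x, ‖b x‖ ≤ K * (1 + ‖x‖)) (hσgr : ∀ x, ‖σ x‖ ≤ K * (1 + ‖x‖))
    (f : (Fin d → ℝ) → ℝ) (hf : ContDiff ℝ 2 f) (hfb : ∃ M, ∀ x, |f x| ≤ M)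
    (lam : ℝ) (hlam : 0 < lam) :
    (lam : EReal) * (⨆ x, (f x : EReal)) ≤
      ⨆ x, ((lam * f x -
          (∑ i, b x i * fderiv ℝ f x (Pi.single i 1) +
            (1/2) * ∑ i, ∑ j, (∑ k, σ x i k * σ x j k) *
              fderiv ℝ (fun y => fderiv ℝ f y (Pi.single j 1)) x (Pi.single i 1)) : ℝ) :
        EReal) := by
  obtain ⟨M, hM⟩ := hfb
  have hbdd : BddAbove (Set.range f) := ⟨M, Set.forall_mem_range.2 fun x => (abs_le.1 (hM x)).2⟩
  have hsup : (⨆ x, (f x : EReal)) ≤ ((⨆ x, f x : ℝ) : EReal) :=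
    iSup_le fun x => EReal.coe_le_coe_iff.2 (le_ciSup hbdd x)
  refine (mul_le_mul_of_nonneg_left hsup (by exact_mod_cast hlam.le)).trans ?_
  rw [← EReal.coe_mul, ← EReal.ge_of_forall_gt_iff_ge]
  intro z hz
  obtain ⟨y, hy⟩ := exists_lt_of_lt_ciSup ((div_lt_iff₀' hlam).2 (EReal.coe_lt_coe_iff.1 hz))
  obtain ⟨x, hx⟩ := exists_lt_sub_diffusionGenerator hbgr hσgr hf hbdd hlam.le y
    (η := lam * f y - z) (by linarith [(div_lt_iff₀' hlam).1 hy])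
  have hzx : z ≤ lam * f x - diffusionGenerator b σ f x := by linarith
  exact le_iSup_of_le x (EReal.coe_le_coe_iff.2 hzx)

/-- Dissipativity of the generator `A*φ = b·∇φ + (1/2) tr(σσᵀ ∇²φ)` on bounded `C²`
functions: with `b`, `σ` globally Lipschitz (hence with linear growth `|b(x)| ≤ K(1+|x|)`,
`‖σ(x)‖ ≤ K(1+|x|)`), for every bounded `C²` function `f` and every `λ > 0` one has
`λ · sup f ≤ sup (λ f − A*f)` (suprema taken in the extended reals). -/
theorem stmt11 {d n : ℕ} (K : NNReal)
    (b : (Fin d → ℝ) → (Fin d → ℝ)) (σ : (Fin d → ℝ) → (Fin d → Fin n → ℝ))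
    (hbLip : LipschitzWith K b) (hσLip : LipschitzWith K σ)
    (hbgr : ∀ x, ‖b x‖ ≤ K * (1 + ‖x‖)) (hσgr : ∀ x, ‖σ x‖ ≤ K * (1 + ‖x‖))
    (f : (Fin d → ℝ) → ℝ) (hf : ContDiff ℝ 2 f) (hfb : ∃ M, ∀ x, |f x| ≤ M)
    (lam : ℝ) (hlam : 0 < lam) :
    (lam : EReal) * (⨆ x, (f x : EReal)) ≤
      ⨆ x, ((lam * f x -
          (∑ i, b x i * fderiv ℝ f x (Pi.single i 1) +
            (1/2) * ∑ i, ∑ j, (∑ k, σ x i k * σ x j k) *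
              fderiv ℝ (fun y => fderiv ℝ f y (Pi.single j 1)) x (Pi.single i 1)) : ℝ) :
        EReal) :=
  stmt11_general K b σ hbgr hσgr f hf hfb lam hlam
end
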